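/- arXiv:math/0307062 — 2 statements merged into one kernel-verified Lean document; each statement's English description precedes it below -/
import Mathlib

section
/- For every n ≥ 0 there exists an indecomposable representation M of Q with dimension vector (n, n+1, n, n+1) together with a short exact sequence of representations 0 → P₄ⁿ → P₂ ⊕ P₁ⁿ → M → 0. -/
variable (k : Type) [Field k]

/-- A finite-dimensional representation of the quiver `Q` with vertices `1,2,3,4`
and arrows `a : 1 → 2`, `b : 1 → 3`, `c : 2 → 4`, `d : 3 → 4`. -/
structure QRep where
  V1 : Type
  V2 : Type
  V3 : Type
  V4 : Type
  [acg1 : AddCommGroup V1]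
  [acg2 : AddCommGroup V2]
  [acg3 : AddCommGroup V3]
  [acg4 : AddCommGroup V4]
  [mod1 : Module k V1]
  [mod2 : Module k V2]
  [mod3 : Module k V3]
  [mod4 : Module k V4]
  [fin1 : FiniteDimensional k V1]
  [fin2 : FiniteDimensional k V2]
  [fin3 : FiniteDimensional k V3]
  [fin4 : FiniteDimensional k V4]
  ma : V1 →ₗ[k] V2
  mb : V1 →ₗ[k] V3
  mc : V2 →ₗ[k] V4
  md : V3 →ₗ[k] V4

attribute [instance] QRep.acg1 QRep.acg2 QRep.acg3 QRep.acg4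
  QRep.mod1 QRep.mod2 QRep.mod3 QRep.mod4
  QRep.fin1 QRep.fin2 QRep.fin3 QRep.fin4

variable {k}

/-- Morphisms of representations of `Q`. -/
@[ext]
structure QHom (M N : QRep k) where
  f1 : M.V1 →ₗ[k] N.V1
  f2 : M.V2 →ₗ[k] N.V2
  f3 : M.V3 →ₗ[k] N.V3
  f4 : M.V4 →ₗ[k] N.V4
  comm_a : f2 ∘ₗ M.ma = N.ma ∘ₗ f1
  comm_b : f3 ∘ₗ M.mb = N.mb ∘ₗ f1
  comm_c : f4 ∘ₗ M.mc = N.mc ∘ₗ f2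
  comm_d : f4 ∘ₗ M.md = N.md ∘ₗ f3

/-- Two representations are isomorphic iff there is a morphism all of whose
components are bijective. -/
def QIso (M N : QRep k) : Prop :=
  ∃ f : QHom M N, Function.Bijective f.f1 ∧ Function.Bijective f.f2 ∧
    Function.Bijective f.f3 ∧ Function.Bijective f.f4

/-- The zero representation(s). -/
def QRep.IsZeroRep (M : QRep k) : Prop :=
  Subsingleton M.V1 ∧ Subsingleton M.V2 ∧ Subsingleton M.V3 ∧ Subsingleton M.V4

/-- Vertexwise direct sum of representations. -/
def QRep.dsum (M N : QRep k) : QRep k where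
  V1 := M.V1 × N.V1
  V2 := M.V2 × N.V2
  V3 := M.V3 × N.V3
  V4 := M.V4 × N.V4
  ma := M.ma.prodMap N.ma
  mb := M.mb.prodMap N.mb
  mc := M.mc.prodMap N.mc
  md := M.md.prodMap N.md

/-- Direct sum of `n` copies of a representation. -/
def QRep.dpow (M : QRep k) (n : ℕ) : QRep k where
  V1 := Fin n → M.V1
  V2 := Fin n → M.V2
  V3 := Fin n → M.V3
  V4 := Fin n → M.V4
  ma := M.ma.compLeft (Fin n)
  mb := M.mb.compLeft (Fin n)
  mc := M.mc.compLeft (Fin n)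
  md := M.md.compLeft (Fin n)

/-- A representation is indecomposable if it is nonzero and not isomorphic to a
direct sum of two nonzero representations. -/
def QRep.Indecomposable (M : QRep k) : Prop :=
  ¬ M.IsZeroRep ∧ ∀ A B : QRep k, QIso M (A.dsum B) → A.IsZeroRep ∨ B.IsZeroRep

/-- `0 → A → B → C → 0` is short exact (vertexwise). -/
def QShortExact {A B C : QRep k} (f : QHom A B) (g : QHom B C) : Prop :=
  (Function.Injective f.f1 ∧ Function.Injective f.f2 ∧
    Function.Injective f.f3 ∧ Function.Injective f.f4) ∧
  (Function.Surjective g.f1 ∧ Function.Surjective g.f2 ∧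
    Function.Surjective g.f3 ∧ Function.Surjective g.f4) ∧
  (LinearMap.range f.f1 = LinearMap.ker g.f1 ∧ LinearMap.range f.f2 = LinearMap.ker g.f2 ∧
    LinearMap.range f.f3 = LinearMap.ker g.f3 ∧ LinearMap.range f.f4 = LinearMap.ker g.f4)

variable (k)

/-- The `n×n` Jordan block with eigenvalue `lam`, as a linear endomorphism of `kⁿ`. -/
def jordan (n : ℕ) (lam : k) : (Fin n → k) →ₗ[k] (Fin n → k) :=
  Matrix.mulVecLin (Matrix.of fun i j : Fin n =>
    if i = j then lam else if (i : ℕ) + 1 = (j : ℕ) then 1 else 0)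

/-- The representation `M_n(λ) = (kⁿ,kⁿ,kⁿ,kⁿ; id,id,id,J_n(λ))`. -/
def Mlam (n : ℕ) (lam : k) : QRep k where
  V1 := Fin n → k
  V2 := Fin n → k
  V3 := Fin n → k
  V4 := Fin n → k
  ma := LinearMap.id
  mb := LinearMap.id
  mc := LinearMap.id
  md := jordan k n lam

/-- The indecomposable projective `P₁ = (k,k,k,k²)`. -/
def P1 : QRep k where
  V1 := k
  V2 := k
  V3 := k
  V4 := k × k
  ma := LinearMap.id
  mb := LinearMap.id
  mc := LinearMap.inl k k k
  md := LinearMap.inr k k k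

/-- The indecomposable projective `P₂ = (0,k,0,k)`. -/
def P2 : QRep k where
  V1 := Fin 0 → k
  V2 := k
  V3 := Fin 0 → k
  V4 := k
  ma := 0
  mb := 0
  mc := LinearMap.id
  md := 0

/-- The indecomposable projective `P₃ = (0,0,k,k)`. -/
def P3 : QRep k where
  V1 := Fin 0 → k
  V2 := Fin 0 → k
  V3 := k
  V4 := k
  ma := 0
  mb := 0
  mc := 0
  md := LinearMap.id

/-- The indecomposable projective `P₄ = (0,0,0,k)`. -/
def P4 : QRep k where
  V1 := Fin 0 → k
  V2 := Fin 0 → k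
  V3 := Fin 0 → k
  V4 := k
  ma := 0
  mb := 0
  mc := 0
  md := 0

/-!
Take `M = (kⁿ, kⁿ⁺¹, kⁿ, kⁿ⁺¹)` with `a : x ↦ (0, x)`, `d : x ↦ (x, 0)` and `b`, `c` identities.
An endomorphism of `M` is a pair `(f, g)` with `g` commuting with both embeddings `kⁿ → kⁿ⁺¹`,
which forces the matrix of `g` to be constant along diagonals, with first and last rows zero off
the diagonal; so every endomorphism is a scalar. Transporting the projection of a decomposition
`M ≅ A ⊕ B` to `M` then shows that `A` or `B` is zero.

The epimorphism `P₂ ⊕ P₁ⁿ → M` is bijective at vertices `1, 2, 3` and is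
`(a, (bᵢ, cᵢ)) ↦ (a, b) + (c, 0)` at vertex `4`, where its kernel has dimension
`(2n + 1) - (n + 1) = n` and is the image of `P₄ⁿ` under `c ↦ (-(c, 0), c)`.
-/

variable {k}

section QHom

variable {A B C M : QRep k}

def QHom.comp (g : QHom B C) (f : QHom A B) : QHom A C where
  f1 := g.f1 ∘ₗ f.f1
  f2 := g.f2 ∘ₗ f.f2
  f3 := g.f3 ∘ₗ f.f3
  f4 := g.f4 ∘ₗ f.f4
  comm_a := by
    rw [LinearMap.comp_assoc, f.comm_a, ← LinearMap.comp_assoc, g.comm_a, LinearMap.comp_assoc]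
  comm_b := by
    rw [LinearMap.comp_assoc, f.comm_b, ← LinearMap.comp_assoc, g.comm_b, LinearMap.comp_assoc]
  comm_c := by
    rw [LinearMap.comp_assoc, f.comm_c, ← LinearMap.comp_assoc, g.comm_c, LinearMap.comp_assoc]
  comm_d := by
    rw [LinearMap.comp_assoc, f.comm_d, ← LinearMap.comp_assoc, g.comm_d, LinearMap.comp_assoc]

theorem LinearEquiv.symm_comp_eq_comp_symm {V V' W W' : Type*} [AddCommGroup V]
    [AddCommGroup V'] [AddCommGroup W] [AddCommGroup W'] [Module k V] [Module k V'] [Module k W]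
    [Module k W'] (e : V ≃ₗ[k] V') (e' : W ≃ₗ[k] W') {m : V →ₗ[k] W} {m' : V' →ₗ[k] W'}
    (h : e'.toLinearMap ∘ₗ m = m' ∘ₗ e.toLinearMap) :
    e'.symm.toLinearMap ∘ₗ m' = m ∘ₗ e.symm.toLinearMap := by
  ext x
  apply e'.injective
  simpa using (LinearMap.congr_fun h (e.symm x)).symm

noncomputable def QHom.invOfBijective (f : QHom M A) (h1 : Function.Bijective f.f1)
    (h2 : Function.Bijective f.f2) (h3 : Function.Bijective f.f3)
    (h4 : Function.Bijective f.f4) : QHom A M where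
  f1 := (LinearEquiv.ofBijective f.f1 h1).symm
  f2 := (LinearEquiv.ofBijective f.f2 h2).symm
  f3 := (LinearEquiv.ofBijective f.f3 h3).symm
  f4 := (LinearEquiv.ofBijective f.f4 h4).symm
  comm_a := LinearEquiv.symm_comp_eq_comp_symm _ _ f.comm_a
  comm_b := LinearEquiv.symm_comp_eq_comp_symm _ _ f.comm_b
  comm_c := LinearEquiv.symm_comp_eq_comp_symm _ _ f.comm_c
  comm_d := LinearEquiv.symm_comp_eq_comp_symm _ _ f.comm_d

variable (A B) in
def QRep.projFst : QHom (A.dsum B) (A.dsum B) where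
  f1 := LinearMap.id.prodMap 0
  f2 := LinearMap.id.prodMap 0
  f3 := LinearMap.id.prodMap 0
  f4 := LinearMap.id.prodMap 0
  comm_a := LinearMap.ext fun _ => Prod.ext rfl (map_zero B.ma).symm
  comm_b := LinearMap.ext fun _ => Prod.ext rfl (map_zero B.mb).symm
  comm_c := LinearMap.ext fun _ => Prod.ext rfl (map_zero B.mc).symm
  comm_d := LinearMap.ext fun _ => Prod.ext rfl (map_zero B.md).symm

end QHom

section

variable {V W : Type} [AddCommGroup V] [AddCommGroup W] [Module k V] [Module k W]

theorem LinearEquiv.eq_smul_id_of_symm_conj_eq_smul_id (e : V ≃ₗ[k] W) {P : W →ₗ[k] W} {c : k}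
    (h : e.symm.toLinearMap ∘ₗ P ∘ₗ e.toLinearMap = c • LinearMap.id) : P = c • LinearMap.id := by
  ext y
  simpa using congrArg e (LinearMap.congr_fun h (e.symm y))

theorem subsingleton_of_prodMap_id_zero_eq_zero
    (h : (LinearMap.id : V →ₗ[k] V).prodMap (0 : W →ₗ[k] W) = 0) : Subsingleton V :=
  subsingleton_of_forall_eq 0 fun v => congrArg Prod.fst (LinearMap.congr_fun h (v, 0))

theorem subsingleton_of_prodMap_id_zero_eq_smul_id {c : k} (hc : c ≠ 0)
    (h : (LinearMap.id : V →ₗ[k] V).prodMap (0 : W →ₗ[k] W) = c • LinearMap.id) :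
    Subsingleton W :=
  subsingleton_of_forall_eq 0 fun w => by
    simpa [hc] using (congrArg Prod.snd (LinearMap.congr_fun h (0, w))).symm

end

theorem QRep.indecomposable_of_forall_endo_eq_smul_id {M : QRep k} (hM : ¬ M.IsZeroRep)
    (hend : ∀ e : QHom M M, ∃ c : k, e.f1 = c • LinearMap.id ∧ e.f2 = c • LinearMap.id ∧
      e.f3 = c • LinearMap.id ∧ e.f4 = c • LinearMap.id) :
    M.Indecomposable := by
  refine ⟨hM, fun A B ⟨φ, h1, h2, h3, h4⟩ => ?_⟩
  obtain ⟨c, e1, e2, e3, e4⟩ :=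
    hend ((φ.invOfBijective h1 h2 h3 h4).comp ((QRep.projFst A B).comp φ))
  replace e1 := (LinearEquiv.ofBijective φ.f1 h1).eq_smul_id_of_symm_conj_eq_smul_id e1
  replace e2 := (LinearEquiv.ofBijective φ.f2 h2).eq_smul_id_of_symm_conj_eq_smul_id e2
  replace e3 := (LinearEquiv.ofBijective φ.f3 h3).eq_smul_id_of_symm_conj_eq_smul_id e3
  replace e4 := (LinearEquiv.ofBijective φ.f4 h4).eq_smul_id_of_symm_conj_eq_smul_id e4
  by_cases hc : c = 0
  · subst hc
    simp only [zero_smul] at e1 e2 e3 e4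
    exact .inl ⟨subsingleton_of_prodMap_id_zero_eq_zero e1,
      subsingleton_of_prodMap_id_zero_eq_zero e2, subsingleton_of_prodMap_id_zero_eq_zero e3,
      subsingleton_of_prodMap_id_zero_eq_zero e4⟩
  · exact .inr ⟨subsingleton_of_prodMap_id_zero_eq_smul_id hc e1,
      subsingleton_of_prodMap_id_zero_eq_smul_id hc e2,
      subsingleton_of_prodMap_id_zero_eq_smul_id hc e3,
      subsingleton_of_prodMap_id_zero_eq_smul_id hc e4⟩

theorem LinearMap.range_eq_ker_of_finrank_add_eq {U V W : Type} [AddCommGroup U] [AddCommGroup V]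
    [AddCommGroup W] [Module k U] [Module k V] [Module k W] [FiniteDimensional k V]
    {f : U →ₗ[k] V} {g : V →ₗ[k] W} (hf : Function.Injective f) (hg : Function.Surjective g)
    (hgf : g ∘ₗ f = 0) (hdim : Module.finrank k U + Module.finrank k W = Module.finrank k V) :
    LinearMap.range f = LinearMap.ker g := by
  refine Submodule.eq_of_le_of_finrank_eq (LinearMap.range_le_ker_iff.mpr hgf) ?_
  have := g.finrank_range_add_finrank_ker
  rw [LinearMap.range_eq_top.mpr hg, finrank_top] at this
  rw [LinearMap.finrank_range_of_inj hf]
  omega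

theorem Matrix.eq_diagonal_of_toeplitz {α : Type*} [Zero α] {n : ℕ}
    (A : Matrix (Fin (n + 1)) (Fin (n + 1)) α)
    (hshift : ∀ i j : Fin n, A i.succ j.succ = A i.castSucc j.castSucc)
    (hlast : ∀ j : Fin n, A (Fin.last n) j.castSucc = 0)
    (hfirst : ∀ j : Fin n, A 0 j.succ = 0) :
    A = Matrix.diagonal fun _ => A 0 0 := by
  have hdiag : ∀ i, A i i = A 0 0 := by
    refine Fin.induction rfl fun i hi => ?_
    rw [hshift, hi]
  have hlower : ∀ i j, j < i → A i j = 0 := by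
    refine Fin.reverseInduction ?_ fun i hi => ?_
    · intro j hj
      obtain ⟨j, rfl⟩ := Fin.eq_castSucc_of_ne_last hj.ne
      exact hlast j
    · intro j hj
      obtain ⟨j, rfl⟩ := Fin.eq_castSucc_of_ne_last (hj.trans (Fin.castSucc_lt_last i)).ne
      rw [← hshift]
      exact hi _ (Fin.succ_lt_succ_iff.mpr (Fin.castSucc_lt_castSucc_iff.mp hj))
  have hupper : ∀ i j, i < j → A i j = 0 := by
    refine Fin.induction ?_ fun i hi => ?_
    · intro j hj
      obtain ⟨j, rfl⟩ := Fin.exists_succ_eq_of_ne_zero hj.ne'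
      exact hfirst j
    · intro j hj
      obtain ⟨j, rfl⟩ := Fin.exists_succ_eq_of_ne_zero ((Fin.succ_pos i).trans hj).ne'
      rw [hshift]
      exact hi _ (Fin.castSucc_lt_castSucc_iff.mpr (Fin.succ_lt_succ_iff.mp hj))
  ext i j
  rcases lt_trichotomy i j with h | rfl | h
  · simp [Matrix.diagonal_apply_ne _ h.ne, hupper i j h]
  · simp [hdiag]
  · simp [Matrix.diagonal_apply_ne _ h.ne', hlower i j h]

variable (k) in
def snocZero (n : ℕ) : (Fin n → k) →ₗ[k] (Fin (n + 1) → k) where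
  toFun x := Fin.snoc x 0
  map_add' x y := by ext i; refine Fin.lastCases ?_ (fun i => ?_) i <;> simp
  map_smul' c x := by ext i; refine Fin.lastCases ?_ (fun i => ?_) i <;> simp

variable (k) in
def consZero (n : ℕ) : (Fin n → k) →ₗ[k] (Fin (n + 1) → k) where
  toFun x := Fin.cons 0 x
  map_add' x y := by ext i; refine Fin.cases ?_ (fun i => ?_) i <;> simp
  map_smul' c x := by ext i; refine Fin.cases ?_ (fun i => ?_) i <;> simp

@[simp]
theorem snocZero_apply {n : ℕ} (x : Fin n → k) : snocZero k n x = Fin.snoc x 0 := rfl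

@[simp]
theorem consZero_apply {n : ℕ} (x : Fin n → k) : consZero k n x = Fin.cons 0 x := rfl

theorem snocZero_single {n : ℕ} (j : Fin n) (a : k) :
    snocZero k n (Pi.single j a) = Pi.single j.castSucc a := by
  ext i
  refine Fin.lastCases ?_ (fun i => ?_) i
  · simp [(Fin.castSucc_lt_last j).ne']
  · simp [Pi.single_apply]

theorem consZero_single {n : ℕ} (j : Fin n) (a : k) :
    consZero k n (Pi.single j a) = Pi.single j.succ a := by
  ext i
  refine Fin.cases ?_ (fun i => ?_) i
  · simp [(Fin.succ_ne_zero j).symm]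
  · simp [Pi.single_apply]

theorem snocZero_injective (n : ℕ) : Function.Injective (snocZero k n) :=
  fun x y h => by simpa using congrArg Fin.init h

theorem exists_eq_smul_id_of_comp_snocZero_of_comp_consZero {n : ℕ}
    (f : (Fin n → k) →ₗ[k] (Fin n → k)) (g : (Fin (n + 1) → k) →ₗ[k] (Fin (n + 1) → k))
    (hsnoc : g ∘ₗ snocZero k n = snocZero k n ∘ₗ f)
    (hcons : g ∘ₗ consZero k n = consZero k n ∘ₗ f) :
    ∃ c : k, f = c • LinearMap.id ∧ g = c • LinearMap.id := by
  have hcol_castSucc : ∀ i j,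
      LinearMap.toMatrix' g i j.castSucc = snocZero k n (f (Pi.single j 1)) i := fun i j => by
    rw [LinearMap.toMatrix'_apply, ← snocZero_single, ← LinearMap.comp_apply, hsnoc,
      LinearMap.comp_apply]
  have hcol_succ : ∀ i j,
      LinearMap.toMatrix' g i j.succ = consZero k n (f (Pi.single j 1)) i := fun i j => by
    rw [LinearMap.toMatrix'_apply, ← consZero_single, ← LinearMap.comp_apply, hcons,
      LinearMap.comp_apply]
  obtain ⟨c, hc⟩ : ∃ c, LinearMap.toMatrix' g = Matrix.diagonal fun _ => c :=
    ⟨_, Matrix.eq_diagonal_of_toeplitz _ (fun i j => by simp [hcol_castSucc, hcol_succ])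
      (fun j => by simp [hcol_castSucc]) (fun j => by simp [hcol_succ])⟩
  have hg : g = c • LinearMap.id := by
    apply LinearMap.toMatrix'.injective
    rw [hc, map_smul, LinearMap.toMatrix'_id, Matrix.smul_one_eq_diagonal]
  refine ⟨c, LinearMap.ext fun x => snocZero_injective n ?_, hg⟩
  rw [← LinearMap.comp_apply, ← hsnoc, hg]
  simp

variable (k) in
def consSnocRep (n : ℕ) : QRep k where
  V1 := Fin n → k
  V2 := Fin (n + 1) → k
  V3 := Fin n → k
  V4 := Fin (n + 1) → k
  ma := consZero k n
  mb := LinearMap.id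
  mc := LinearMap.id
  md := snocZero k n

theorem consSnocRep_indecomposable (n : ℕ) : (consSnocRep k n).Indecomposable := by
  refine QRep.indecomposable_of_forall_endo_eq_smul_id
    (fun h => not_subsingleton (Fin (n + 1) → k) h.2.1) fun e => ?_
  have h31 : e.f3 = e.f1 := e.comm_b
  have h42 : e.f4 = e.f2 := e.comm_c
  have hsnoc : e.f2 ∘ₗ snocZero k n = snocZero k n ∘ₗ e.f1 := by
    have := e.comm_d
    rwa [h31, h42] at this
  obtain ⟨c, h1, h2⟩ := exists_eq_smul_id_of_comp_snocZero_of_comp_consZero e.f1 e.f2 hsnoc e.comm_a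
  exact ⟨c, h1, h2, h31 ▸ h1, h42 ▸ h2⟩

instance (n : ℕ) : Subsingleton ((P4 k).dpow n).V1 :=
  inferInstanceAs (Subsingleton (Fin n → Fin 0 → k))

instance (n : ℕ) : Subsingleton ((P4 k).dpow n).V2 :=
  inferInstanceAs (Subsingleton (Fin n → Fin 0 → k))

instance (n : ℕ) : Subsingleton ((P4 k).dpow n).V3 :=
  inferInstanceAs (Subsingleton (Fin n → Fin 0 → k))

namespace consSnocRep

variable (k)

def resolutionProj₄ (n : ℕ) : (k × (Fin n → k × k)) →ₗ[k] (Fin (n + 1) → k) :=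
  (Fin.consLinearEquiv k fun _ => k).toLinearMap ∘ₗ
      LinearMap.id.prodMap ((LinearMap.fst k k k).compLeft (Fin n)) +
    snocZero k n ∘ₗ (LinearMap.snd k k k).compLeft (Fin n) ∘ₗ LinearMap.snd k k _

def resolutionIncl₄ (n : ℕ) : (Fin n → k) →ₗ[k] (k × (Fin n → k × k)) where
  toFun x := (-snocZero k n x 0, fun i => (-snocZero k n x i.succ, x i))
  map_add' x y := by ext <;> simp only [map_add, Pi.add_apply, neg_add, Prod.fst_add, Prod.snd_add]
  map_smul' c x := by ext <;> simp

variable {k} in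
@[simp]
theorem resolutionProj₄_apply {n : ℕ} (p : k × (Fin n → k × k)) :
    resolutionProj₄ k n p = Fin.cons p.1 (fun i => (p.2 i).1) + snocZero k n (fun i => (p.2 i).2) :=
  rfl

def resolutionProj (n : ℕ) : QHom ((P2 k).dsum ((P1 k).dpow n)) (consSnocRep k n) where
  f1 := LinearMap.snd k (Fin 0 → k) (Fin n → k)
  f2 := (Fin.consLinearEquiv k fun _ => k).toLinearMap
  f3 := LinearMap.snd k (Fin 0 → k) (Fin n → k)
  f4 := resolutionProj₄ k n
  comm_a := rfl
  comm_b := rfl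
  comm_c := LinearMap.ext fun (p : k × (Fin n → k)) => by
    change Fin.cons p.1 p.2 + snocZero k n 0 = Fin.cons p.1 p.2
    rw [map_zero, add_zero]
  comm_d := LinearMap.ext fun (p : (Fin 0 → k) × (Fin n → k)) => by
    change consZero k n 0 + snocZero k n p.2 = snocZero k n p.2
    rw [map_zero, zero_add]

def resolutionIncl (n : ℕ) : QHom ((P4 k).dpow n) ((P2 k).dsum ((P1 k).dpow n)) where
  f1 := 0
  f2 := 0
  f3 := 0
  f4 := resolutionIncl₄ k n
  comm_a := Subsingleton.elim _ _
  comm_b := Subsingleton.elim _ _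
  comm_c := Subsingleton.elim _ _
  comm_d := Subsingleton.elim _ _

variable {k}

theorem resolution_shortExact (n : ℕ) : QShortExact (resolutionIncl k n) (resolutionProj k n) := by
  have inj₄ : Function.Injective (resolutionIncl₄ k n) := fun x y h =>
    funext fun i => congrArg (fun p => (p.2 i).2) h
  have surj₁ : Function.Surjective (LinearMap.snd k (Fin 0 → k) (Fin n → k)) :=
    LinearMap.snd_surjective
  have surj₂ := (Fin.consLinearEquiv k fun _ : Fin (n + 1) => k).surjective
  have surj₄ : Function.Surjective (resolutionProj₄ k n) := fun v =>
    ⟨(v 0, fun i => (Fin.tail v i, 0)), by simp [-snocZero_apply, ← Pi.zero_def]⟩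
  have dim₁ : Module.finrank k (Fin n → Fin 0 → k) + Module.finrank k (Fin n → k) =
      Module.finrank k ((Fin 0 → k) × (Fin n → k)) := by
    simp [Module.finrank_zero_of_subsingleton]
  have dim₂ : Module.finrank k (Fin n → Fin 0 → k) + Module.finrank k (Fin (n + 1) → k) =
      Module.finrank k (k × (Fin n → k)) := by
    simp [Module.finrank_zero_of_subsingleton, add_comm]
  have dim₄ : Module.finrank k (Fin n → k) + Module.finrank k (Fin (n + 1) → k) =
      Module.finrank k (k × (Fin n → k × k)) := by simp [Module.finrank_pi_fintype]; ring
  refine ⟨⟨Function.injective_of_subsingleton _, Function.injective_of_subsingleton _,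
    Function.injective_of_subsingleton _, inj₄⟩, ⟨surj₁, surj₂, surj₁, surj₄⟩, ⟨?_, ?_, ?_, ?_⟩⟩
  · exact LinearMap.range_eq_ker_of_finrank_add_eq (Function.injective_of_subsingleton _) surj₁
      (Subsingleton.elim _ _) dim₁
  · exact LinearMap.range_eq_ker_of_finrank_add_eq (Function.injective_of_subsingleton _) surj₂
      (Subsingleton.elim _ _) dim₂
  · exact LinearMap.range_eq_ker_of_finrank_add_eq (Function.injective_of_subsingleton _) surj₁
      (Subsingleton.elim _ _) dim₁
  · refine LinearMap.range_eq_ker_of_finrank_add_eq inj₄ surj₄ ?_ dim₄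
    ext x : 1
    change Fin.cons ((-snocZero k n x) 0) (Fin.tail (-snocZero k n x)) + snocZero k n x = 0
    rw [Fin.cons_self_tail, neg_add_cancel]

end consSnocRep

/-- there is an indecomposable representation `M` of `Q` with the
given dimension vector together with a short exact sequence as indicated. -/
theorem stmt5 (k : Type) [Field k] (n : ℕ) :
    ∃ M : QRep k, M.Indecomposable ∧
      Module.finrank k M.V1 = n ∧ Module.finrank k M.V2 = n+1 ∧
      Module.finrank k M.V3 = n ∧ Module.finrank k M.V4 = n+1 ∧
      ∃ (f : QHom ((P4 k).dpow n) ((P2 k).dsum ((P1 k).dpow n))) (g : QHom ((P2 k).dsum ((P1 k).dpow n)) M), QShortExact f g :=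
  ⟨consSnocRep k n, consSnocRep_indecomposable n, Module.finrank_fin_fun k,
    Module.finrank_fin_fun k, Module.finrank_fin_fun k, Module.finrank_fin_fun k, _, _,
    consSnocRep.resolution_shortExact n⟩
end

section
/- For every n ≥ 0 there exists an indecomposable representation M of Q with dimension vector (n, n, n+1, n+1) together with a short exact sequence of representations 0 → P₄ⁿ → P₃ ⊕ P₁ⁿ → M → 0. -/
variable (k : Type) [Field k]

variable {k}

variable (k)

/-!
Take for `M` the representation whose two paths `1 → 4` realise the Kronecker module
`kⁿ ⇉ kⁿ⁺¹`, `x ↦ (x, 0)` and `x ↦ (0, x)`, with `a` and `d` identities. An endomorphism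
`(B, A)` of `M` intertwines both embeddings, so the matrix of `A` is constant along diagonals
and vanishes off the diagonal in its first and last rows: `A` and `B` are the same scalar `c`.
If `M ≅ X ⊕ Y`, the projection onto `X` conjugates to such an endomorphism; `c = 0` forces
`X = 0` and `c ≠ 0` forces `Y = 0`.

`M` is generated by the basis of `V₁` (a map from `P₁ⁿ`) and the last basis vector of `V₃`
(a map from `P₃`). At vertex 4 the generator images `(0, eᵢ)` are reached both through `c` and
through `d`, giving `n` independent relations; as `2n + 1 = n + (n + 1)`, they span the kernel.
-/

open Module

theorem LinearEquiv.symm_comp_eq_comp_symm_s6 {R V₁ V₂ W₁ W₂ : Type*} [Semiring R]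
    [AddCommMonoid V₁] [AddCommMonoid V₂] [AddCommMonoid W₁] [AddCommMonoid W₂]
    [Module R V₁] [Module R V₂] [Module R W₁] [Module R W₂]
    {e₁ : V₁ ≃ₗ[R] W₁} {e₂ : V₂ ≃ₗ[R] W₂} {u : V₁ →ₗ[R] V₂} {v : W₁ →ₗ[R] W₂}
    (h : e₂.toLinearMap ∘ₗ u = v ∘ₗ e₁.toLinearMap) :
    e₂.symm.toLinearMap ∘ₗ v = u ∘ₗ e₁.symm.toLinearMap := by
  ext x
  simpa using congr(e₂.symm ($h (e₁.symm x))).symm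

theorem LinearMap.range_eq_ker_of_finrank_eq {K U V W : Type*} [DivisionRing K]
    [AddCommGroup U] [AddCommGroup V] [AddCommGroup W] [Module K U] [Module K V] [Module K W]
    [FiniteDimensional K V] {f : U →ₗ[K] V} {g : V →ₗ[K] W} (hf : Function.Injective f)
    (hg : Function.Surjective g) (hgf : g ∘ₗ f = 0)
    (hdim : finrank K V = finrank K U + finrank K W) :
    LinearMap.range f = LinearMap.ker g := by
  refine Submodule.eq_of_le_of_finrank_eq (LinearMap.range_le_ker_iff.mpr hgf) ?_
  have := g.finrank_range_add_finrank_ker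
  rw [LinearMap.range_eq_top.mpr hg, finrank_top] at this
  rw [LinearMap.finrank_range_of_inj hf]
  omega

theorem Fin.eq_ite_of_succ_castSucc {α : Type*} [Zero α] {n : ℕ}
    {a : Fin (n + 1) → Fin (n + 1) → α}
    (hshift : ∀ i j : Fin n, a i.succ j.succ = a i.castSucc j.castSucc)
    (hfirst : ∀ j : Fin n, a 0 j.succ = 0) (hlast : ∀ j : Fin n, a (Fin.last n) j.castSucc = 0)
    (i j : Fin (n + 1)) : a i j = if i = j then a 0 0 else 0 := by
  have diag : ∀ (d : ℕ) (i j i' j' : Fin (n + 1)), (i' : ℕ) = i + d → (j' : ℕ) = j + d →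
      a i' j' = a i j := by
    intro d
    induction d with
    | zero => intro i j i' j' hi hj; rw [Fin.ext hi, Fin.ext hj]
    | succ d ih =>
      intro i j i' j' hi hj
      have hid : (i : ℕ) + d < n := by omega
      have hjd : (j : ℕ) + d < n := by omega
      obtain rfl : i' = (⟨i + d, hid⟩ : Fin n).succ := Fin.ext (by simp [hi]; omega)
      obtain rfl : j' = (⟨j + d, hjd⟩ : Fin n).succ := Fin.ext (by simp [hj]; omega)
      exact (hshift _ _).trans (ih i j _ _ rfl rfl)
  rcases lt_trichotomy i j with h | rfl | h
  · rw [if_neg h.ne, diag i 0 ⟨j - i, by omega⟩ i j (by simp) (by simp; omega),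
      show (⟨j - i, _⟩ : Fin (n + 1)) = (⟨j - i - 1, by omega⟩ : Fin n).succ from
        Fin.ext (by simp; omega)]
    exact hfirst _
  · rw [if_pos rfl]
    exact diag i 0 0 i i (by simp) (by simp)
  · rw [if_neg h.ne', ← diag (n - i) i j (Fin.last n) ⟨j + (n - i), by omega⟩ (by simp; omega) rfl,
      show (⟨j + (n - i), _⟩ : Fin (n + 1)) = (⟨j + (n - i), by omega⟩ : Fin n).castSucc from rfl]
    exact hlast _

theorem exists_eq_smul_id_of_snoc_cons {R : Type*} [CommSemiring R] {n : ℕ}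
    {A : (Fin (n + 1) → R) →ₗ[R] (Fin (n + 1) → R)} {B : (Fin n → R) →ₗ[R] (Fin n → R)}
    (hsnoc : ∀ x, A (Fin.snoc x 0) = Fin.snoc (B x) 0)
    (hcons : ∀ x, A (Fin.cons 0 x) = Fin.cons 0 (B x)) :
    ∃ c : R, A = c • LinearMap.id ∧ B = c • LinearMap.id := by
  have snoc_single : ∀ j : Fin n,
      (Fin.snoc (Pi.single j 1) 0 : Fin (n + 1) → R) = Pi.single j.castSucc 1 := fun j => by
    ext i; induction i using Fin.lastCases <;> simp [Pi.single_apply]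
  have cons_single : ∀ j : Fin n,
      (Fin.cons 0 (Pi.single j 1) : Fin (n + 1) → R) = Pi.single j.succ 1 := fun j => by
    ext i; induction i using Fin.cases <;> simp [Pi.single_apply]
  have hB : ∀ i j : Fin n, B (Pi.single j 1) i = A (Pi.single j.castSucc 1) i.castSucc :=
    fun i j => by rw [← snoc_single, hsnoc, Fin.snoc_castSucc]
  have hdiag : ∀ i j, A (Pi.single j 1) i = if i = j then A (Pi.single 0 1) 0 else 0 :=
    Fin.eq_ite_of_succ_castSucc (a := fun i j => A (Pi.single j 1) i)
      (fun i j => by simp only [← cons_single, hcons, Fin.cons_succ, hB])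
      (fun j => by simp only [← cons_single, hcons, Fin.cons_zero])
      (fun j => by simp only [← snoc_single, hsnoc, Fin.snoc_last])
  refine ⟨A (Pi.single 0 1) 0, ?_, ?_⟩
  · ext j i
    simpa [Pi.single_apply] using hdiag i j
  · ext j i
    simpa [Pi.single_apply, hB] using hdiag i.castSucc j.castSucc

theorem LinearEquiv.subsingleton_of_conj_prodMap_eq_smul {K V VA VB : Type*} [Field K]
    [AddCommGroup V] [AddCommGroup VA] [AddCommGroup VB] [Module K V] [Module K VA] [Module K VB]
    (e : V ≃ₗ[K] VA × VB) {c : K}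
    (h : e.symm.toLinearMap ∘ₗ LinearMap.prodMap LinearMap.id 0 ∘ₗ e.toLinearMap =
      c • LinearMap.id) :
    (c ≠ 1 → Subsingleton VA) ∧ (c ≠ 0 → Subsingleton VB) := by
  have hproj : ∀ w : VA × VB, (w.1, 0) = c • w := fun w => by
    simpa using congr(e ($h (e.symm w)))
  refine ⟨fun hc => ⟨fun a a' => ?_⟩, fun hc => ⟨fun b b' => ?_⟩⟩
  · have ha : ∀ a : VA, a = 0 := fun a => by
      have : (1 - c) • a = 0 := by
        rw [sub_smul, one_smul, sub_eq_zero]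
        simpa using congr_arg Prod.fst (hproj (a, 0))
      exact (smul_eq_zero.mp this).resolve_left (sub_ne_zero.mpr hc.symm)
    rw [ha a, ha a']
  · have hb : ∀ b : VB, b = 0 := fun b =>
      (smul_eq_zero.mp (by simpa using (congr_arg Prod.snd (hproj (0, b))).symm)).resolve_left hc
    rw [hb b, hb b']

variable {k}

namespace QHom

variable {L M N : QRep k}

def comp_s6 (g : QHom M N) (f : QHom L M) : QHom L N where
  f1 := g.f1 ∘ₗ f.f1
  f2 := g.f2 ∘ₗ f.f2
  f3 := g.f3 ∘ₗ f.f3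
  f4 := g.f4 ∘ₗ f.f4
  comm_a := by rw [LinearMap.comp_assoc, f.comm_a, ← LinearMap.comp_assoc, g.comm_a]; rfl
  comm_b := by rw [LinearMap.comp_assoc, f.comm_b, ← LinearMap.comp_assoc, g.comm_b]; rfl
  comm_c := by rw [LinearMap.comp_assoc, f.comm_c, ← LinearMap.comp_assoc, g.comm_c]; rfl
  comm_d := by rw [LinearMap.comp_assoc, f.comm_d, ← LinearMap.comp_assoc, g.comm_d]; rfl

noncomputable def inv (f : QHom M N) (h1 : Function.Bijective f.f1)
    (h2 : Function.Bijective f.f2) (h3 : Function.Bijective f.f3)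
    (h4 : Function.Bijective f.f4) : QHom N M where
  f1 := (LinearEquiv.ofBijective f.f1 h1).symm
  f2 := (LinearEquiv.ofBijective f.f2 h2).symm
  f3 := (LinearEquiv.ofBijective f.f3 h3).symm
  f4 := (LinearEquiv.ofBijective f.f4 h4).symm
  comm_a := LinearEquiv.symm_comp_eq_comp_symm_s6 f.comm_a
  comm_b := LinearEquiv.symm_comp_eq_comp_symm_s6 f.comm_b
  comm_c := LinearEquiv.symm_comp_eq_comp_symm_s6 f.comm_c
  comm_d := LinearEquiv.symm_comp_eq_comp_symm_s6 f.comm_d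

end QHom

namespace QRep

def dsumProjFst (A B : QRep k) : QHom (A.dsum B) (A.dsum B) where
  f1 := LinearMap.prodMap LinearMap.id 0
  f2 := LinearMap.prodMap LinearMap.id 0
  f3 := LinearMap.prodMap LinearMap.id 0
  f4 := LinearMap.prodMap LinearMap.id 0
  comm_a := LinearMap.ext fun _ => Prod.ext rfl (map_zero B.ma).symm
  comm_b := LinearMap.ext fun _ => Prod.ext rfl (map_zero B.mb).symm
  comm_c := LinearMap.ext fun _ => Prod.ext rfl (map_zero B.mc).symm
  comm_d := LinearMap.ext fun _ => Prod.ext rfl (map_zero B.md).symm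

def IsSchurian (M : QRep k) : Prop :=
  ∀ e : QHom M M, ∃ c : k, e.f1 = c • LinearMap.id ∧ e.f2 = c • LinearMap.id ∧
    e.f3 = c • LinearMap.id ∧ e.f4 = c • LinearMap.id

theorem IsSchurian.indecomposable {M : QRep k} (hM : M.IsSchurian) (h0 : ¬ M.IsZeroRep) :
    M.Indecomposable := by
  refine ⟨h0, fun A B ⟨f, h1, h2, h3, h4⟩ => ?_⟩
  obtain ⟨c, e1, e2, e3, e4⟩ := hM ((f.inv h1 h2 h3 h4).comp_s6 ((A.dsumProjFst B).comp_s6 f))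
  dsimp only [QHom.comp_s6, QHom.inv, dsumProjFst] at e1 e2 e3 e4
  have v1 := (LinearEquiv.ofBijective f.f1 h1).subsingleton_of_conj_prodMap_eq_smul e1
  have v2 := (LinearEquiv.ofBijective f.f2 h2).subsingleton_of_conj_prodMap_eq_smul e2
  have v3 := (LinearEquiv.ofBijective f.f3 h3).subsingleton_of_conj_prodMap_eq_smul e3
  have v4 := (LinearEquiv.ofBijective f.f4 h4).subsingleton_of_conj_prodMap_eq_smul e4
  by_cases hc : c = 0
  · have hc1 : c ≠ 1 := by simp [hc]
    exact Or.inl ⟨v1.1 hc1, v2.1 hc1, v3.1 hc1, v4.1 hc1⟩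
  · exact Or.inr ⟨v1.2 hc, v2.2 hc, v3.2 hc, v4.2 hc⟩

end QRep

variable (k)

def snocLinearMap (n : ℕ) : k × (Fin n → k) →ₗ[k] (Fin (n + 1) → k) where
  toFun p := Fin.snoc p.2 p.1
  map_add' p q := by ext i; induction i using Fin.lastCases <;> simp
  map_smul' c p := by ext i; induction i using Fin.lastCases <;> simp

theorem snocLinearMap_surjective (n : ℕ) : Function.Surjective (snocLinearMap k n) :=
  fun y => ⟨(y (Fin.last n), Fin.init y), Fin.snoc_init_self y⟩

abbrev kroneckerRep (n : ℕ) : QRep k where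
  V1 := Fin n → k
  V2 := Fin n → k
  V3 := Fin (n + 1) → k
  V4 := Fin (n + 1) → k
  ma := LinearMap.id
  mb := snocLinearMap k n ∘ₗ LinearMap.inr k k (Fin n → k)
  mc := (Fin.consLinearEquiv k fun _ => k).toLinearMap ∘ₗ LinearMap.inr k k (Fin n → k)
  md := LinearMap.id

theorem kroneckerRep_isSchurian (n : ℕ) : (kroneckerRep k n).IsSchurian := by
  intro e
  have h21 : e.f2 = e.f1 := e.comm_a
  have h43 : e.f4 = e.f3 := e.comm_d
  obtain ⟨c, hA, hB⟩ := exists_eq_smul_id_of_snoc_cons (A := e.f3) (B := e.f1)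
    (fun x => LinearMap.congr_fun e.comm_b x)
    (fun x => by rw [← h21, ← h43]; exact LinearMap.congr_fun e.comm_c x)
  exact ⟨c, hB, h21 ▸ hB, hA, h43 ▸ hA⟩

theorem kroneckerRep_indecomposable (n : ℕ) : (kroneckerRep k n).Indecomposable :=
  (kroneckerRep_isSchurian k n).indecomposable fun ⟨_, _, h3, _⟩ =>
    zero_ne_one (congr_fun (h3.elim (0 : Fin (n + 1) → k) 1) 0)

def kroneckerCover (n : ℕ) : QHom ((P3 k).dsum ((P1 k).dpow n)) (kroneckerRep k n) where
  f1 := LinearMap.snd k (Fin 0 → k) (Fin n → k)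
  f2 := LinearMap.snd k (Fin 0 → k) (Fin n → k)
  f3 := snocLinearMap k n
  f4 := snocLinearMap k n ∘ₗ LinearMap.id.prodMap ((LinearMap.snd k k k).compLeft (Fin n)) +
    (kroneckerRep k n).mc ∘ₗ (LinearMap.fst k k k).compLeft (Fin n) ∘ₗ LinearMap.snd k k _
  comm_a := rfl
  comm_b := rfl
  comm_c := LinearMap.ext fun x =>
    show snocLinearMap k n 0 + (kroneckerRep k n).mc x.2 = (kroneckerRep k n).mc x.2 by
      rw [map_zero, zero_add]
  comm_d := LinearMap.ext fun x =>
    show snocLinearMap k n x + (kroneckerRep k n).mc 0 = snocLinearMap k n x by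
      rw [map_zero, add_zero]

-- `q` sits in the `c`-coordinates of `P₁ⁿ`; the other coordinates hold the
-- `snocLinearMap`-preimage of `-(0, q)`.
def kroneckerRelations (n : ℕ) : (Fin n → k) →ₗ[k] k × (Fin n → k × k) where
  toFun q := ((-(kroneckerRep k n).mc q) (Fin.last n),
    fun i => (q i, (-(kroneckerRep k n).mc q) i.castSucc))
  map_add' q r := by
    ext <;> simp only [map_add, neg_add, Pi.add_apply, Prod.fst_add, Prod.snd_add]
  map_smul' c q := by
    ext <;> simp only [map_smul, Pi.neg_apply, Pi.smul_apply, smul_neg, Prod.smul_fst,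
      Prod.smul_snd, RingHom.id_apply]

theorem kroneckerCover_comp_relations (n : ℕ) :
    (kroneckerCover k n).f4 ∘ₗ kroneckerRelations k n = 0 := LinearMap.ext fun q =>
  show Fin.snoc (Fin.init (-(kroneckerRep k n).mc q)) ((-(kroneckerRep k n).mc q) (Fin.last n)) +
    (kroneckerRep k n).mc q = 0 by rw [Fin.snoc_init_self, neg_add_cancel]

instance inst_s6 (n : ℕ) : Subsingleton ((P4 k).dpow n).V1 :=
  inferInstanceAs (Subsingleton (Fin n → Fin 0 → k))

instance inst_s6_2 (n : ℕ) : Subsingleton ((P4 k).dpow n).V2 :=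
  inferInstanceAs (Subsingleton (Fin n → Fin 0 → k))

instance inst_s6_3 (n : ℕ) : Subsingleton ((P4 k).dpow n).V3 :=
  inferInstanceAs (Subsingleton (Fin n → Fin 0 → k))

def kroneckerRelationsHom (n : ℕ) : QHom ((P4 k).dpow n) ((P3 k).dsum ((P1 k).dpow n)) where
  f1 := 0
  f2 := 0
  f3 := 0
  f4 := kroneckerRelations k n
  comm_a := Subsingleton.elim _ _
  comm_b := Subsingleton.elim _ _
  comm_c := Subsingleton.elim _ _
  comm_d := Subsingleton.elim _ _

theorem kronecker_shortExact (n : ℕ) :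
    QShortExact (kroneckerRelationsHom k n) (kroneckerCover k n) := by
  have hf4 : Function.Injective (kroneckerRelations k n) := fun q r h =>
    funext fun i => congr_arg (fun v => (v.2 i).1) h
  have hg4 : Function.Surjective (kroneckerCover k n).f4 := fun y => by
    obtain ⟨v, rfl⟩ := snocLinearMap_surjective k n y
    exact ⟨_, LinearMap.congr_fun (kroneckerCover k n).comm_d v⟩
  refine ⟨⟨Function.injective_of_subsingleton _, Function.injective_of_subsingleton _,
    Function.injective_of_subsingleton _, hf4⟩, ⟨LinearMap.snd_surjective,
    LinearMap.snd_surjective, snocLinearMap_surjective k n, hg4⟩, ?_, ?_, ?_, ?_⟩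
  · exact LinearMap.range_eq_ker_of_finrank_eq (Function.injective_of_subsingleton _)
      LinearMap.snd_surjective (LinearMap.comp_zero _)
      (show finrank k ((Fin 0 → k) × (Fin n → k)) =
        finrank k (Fin n → Fin 0 → k) + finrank k (Fin n → k) by
          simp [finrank_zero_of_subsingleton])
  · exact LinearMap.range_eq_ker_of_finrank_eq (Function.injective_of_subsingleton _)
      LinearMap.snd_surjective (LinearMap.comp_zero _)
      (show finrank k ((Fin 0 → k) × (Fin n → k)) =
        finrank k (Fin n → Fin 0 → k) + finrank k (Fin n → k) by
          simp [finrank_zero_of_subsingleton])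
  · exact LinearMap.range_eq_ker_of_finrank_eq (Function.injective_of_subsingleton _)
      (snocLinearMap_surjective k n) (LinearMap.comp_zero _)
      (show finrank k (k × (Fin n → k)) =
        finrank k (Fin n → Fin 0 → k) + finrank k (Fin (n + 1) → k) by
          simp [finrank_zero_of_subsingleton, add_comm])
  · exact LinearMap.range_eq_ker_of_finrank_eq hf4 hg4 (kroneckerCover_comp_relations k n)
      (show finrank k (k × (Fin n → k × k)) =
        finrank k (Fin n → k) + finrank k (Fin (n + 1) → k) by
          simp [finrank_pi_fintype]; ring)

/-- there is an indecomposable representation `M` of `Q` with the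
given dimension vector together with a short exact sequence as indicated. -/
theorem stmt6 (k : Type) [Field k] (n : ℕ) :
    ∃ M : QRep k, M.Indecomposable ∧
      Module.finrank k M.V1 = n ∧ Module.finrank k M.V2 = n ∧
      Module.finrank k M.V3 = n+1 ∧ Module.finrank k M.V4 = n+1 ∧
      ∃ (f : QHom ((P4 k).dpow n) ((P3 k).dsum ((P1 k).dpow n))) (g : QHom ((P3 k).dsum ((P1 k).dpow n)) M), QShortExact f g := by
  refine ⟨kroneckerRep k n, kroneckerRep_indecomposable k n, ?_, ?_, ?_, ?_,
    kroneckerRelationsHom k n, kroneckerCover k n, kronecker_shortExact k n⟩ <;>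
  exact finrank_fin_fun k
end
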